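/- arXiv:1603.00648 — 3 statements merged into one kernel-verified Lean document; each statement's English description precedes it below -/
import Mathlib

section
/- Fix a cell index j and a user index m. Assume the pilot-contamination term satisfies Σ_{ℓ∈𝓛_j(r), ℓ≠j} β_{j,ℓ,m}² > 0, and define κ_{j,m} = [ (1/(ρ_{p,j,m}² ρ_{d,j,m}²)) · Σ_{ℓ=0}^{L−1} Σ_{k=0}^{K−1} ρ_{d,ℓ,k}² β_{j,ℓ,k}² ] / [ Σ_{ℓ∈𝓛_j(r), ℓ≠j} β_{j,ℓ,m}² ]. Then SINR^{SP}_{j,m}(κ_{j,m}) = SINR^{TP}_{j,m}, and for every uplink duration C_u > κ_{j,m} one has SINR^{SP}_{j,m}(C_u) > SINR^{TP}_{j,m}; i.e., C_u > κ_{j,m} is a sufficient condition for the superimposed-pilot SINR to exceed the time-multiplexed-pilot SINR. -/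
open Finset

/-! The superimposed-pilot SINR is linear in the uplink duration, `C ↦ C · β² ρ_p² ρ_d² / S`
with positive slope, and `κ` is exactly the duration at which this line reaches the
time-multiplexed SINR `β² / D`. -/

lemma div_one_div_mul_mul_eq (a p S C : ℝ) : a / (1 / (C * p) * S) = C * (a * p / S) := by
  rw [one_div_mul_eq_div, div_div_eq_mul_div]
  ring

lemma div_div_mul_div_cancel {a p S D : ℝ} (hp : p ≠ 0) (hS : S ≠ 0) (hD : D ≠ 0) :
    1 / p * S / D * (a * p / S) = a / D := by
  field_simp

theorem stmt0_general (L K : ℕ)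
    (β ρd ρp : Fin L → Fin K → ℝ)
    (hβ : ∀ ℓ k, 0 < β ℓ k) (hρd : ∀ ℓ k, 0 < ρd ℓ k) (hρp : ∀ ℓ k, 0 < ρp ℓ k)
    (𝓛 : Finset (Fin L)) (j : Fin L) (m : Fin K)
    (hden : 0 < ∑ ℓ ∈ 𝓛.erase j, (β ℓ m) ^ 2)
    (SINR_TP : ℝ)
    (hTP : SINR_TP = (β j m) ^ 2 / ∑ ℓ ∈ 𝓛.erase j, (β ℓ m) ^ 2)
    (SINR_SP : ℝ → ℝ)
    (hSP : ∀ Cu : ℝ, SINR_SP Cu = (β j m) ^ 2 /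
      ((1 / (Cu * (ρp j m) ^ 2 * (ρd j m) ^ 2)) *
        ∑ ℓ, ∑ k, (ρd ℓ k) ^ 2 * (β ℓ k) ^ 2))
    (κ : ℝ)
    (hκ : κ = ((1 / ((ρp j m) ^ 2 * (ρd j m) ^ 2)) *
        ∑ ℓ, ∑ k, (ρd ℓ k) ^ 2 * (β ℓ k) ^ 2) /
      ∑ ℓ ∈ 𝓛.erase j, (β ℓ m) ^ 2) :
    SINR_SP κ = SINR_TP ∧ ∀ Cu : ℝ, κ < Cu → SINR_TP < SINR_SP Cu := by
  set S := ∑ ℓ, ∑ k, (ρd ℓ k) ^ 2 * (β ℓ k) ^ 2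
  set p := (ρp j m) ^ 2 * (ρd j m) ^ 2
  have hS : 0 < S :=
    sum_pos (fun ℓ _ ↦ sum_pos (fun k _ ↦ by have := hβ ℓ k; have := hρd ℓ k; positivity)
      (univ_nonempty_iff.mpr ⟨m⟩)) (univ_nonempty_iff.mpr ⟨j⟩)
  have hp : 0 < p := by have := hρp j m; have := hρd j m; positivity
  have hslope : 0 < (β j m) ^ 2 * p / S := by have := hβ j m; positivity
  have hlinear : ∀ Cu, SINR_SP Cu = Cu * ((β j m) ^ 2 * p / S) := fun Cu ↦ by
    rw [hSP, mul_assoc, div_one_div_mul_mul_eq]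
  have hbreakeven : SINR_SP κ = SINR_TP := by
    rw [hlinear, hTP, hκ, div_div_mul_div_cancel hp.ne' hS.ne' hden.ne']
  refine ⟨hbreakeven, fun Cu hCu ↦ ?_⟩
  rw [← hbreakeven, hlinear, hlinear]
  exact mul_lt_mul_of_pos_right hCu hslope

/-- Theorem 1 (superimposed-pilot SINR vs. time-multiplexed-pilot SINR): with
`κ` defined as the ratio of the superimposed-pilot interference factor to the
pilot-contamination term, the superimposed-pilot SINR at uplink duration `κ`
equals the time-multiplexed-pilot SINR, and for every uplink duration
`Cu > κ` the superimposed-pilot SINR strictly exceeds it. -/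
theorem stmt0 (L K : ℕ) (hL : 2 ≤ L) (hK : 1 ≤ K)
    (β ρd ρp : Fin L → Fin K → ℝ)
    (hβ : ∀ ℓ k, 0 < β ℓ k) (hρd : ∀ ℓ k, 0 < ρd ℓ k) (hρp : ∀ ℓ k, 0 < ρp ℓ k)
    (𝓛 : Finset (Fin L)) (j : Fin L) (hj : j ∈ 𝓛) (m : Fin K)
    (hden : 0 < ∑ ℓ ∈ 𝓛.erase j, (β ℓ m) ^ 2)
    (SINR_TP : ℝ)
    (hTP : SINR_TP = (β j m) ^ 2 / ∑ ℓ ∈ 𝓛.erase j, (β ℓ m) ^ 2)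
    (SINR_SP : ℝ → ℝ)
    (hSP : ∀ Cu : ℝ, SINR_SP Cu = (β j m) ^ 2 /
      ((1 / (Cu * (ρp j m) ^ 2 * (ρd j m) ^ 2)) *
        ∑ ℓ, ∑ k, (ρd ℓ k) ^ 2 * (β ℓ k) ^ 2))
    (κ : ℝ)
    (hκ : κ = ((1 / ((ρp j m) ^ 2 * (ρd j m) ^ 2)) *
        ∑ ℓ, ∑ k, (ρd ℓ k) ^ 2 * (β ℓ k) ^ 2) /
      ∑ ℓ ∈ 𝓛.erase j, (β ℓ m) ^ 2) :
    SINR_SP κ = SINR_TP ∧ ∀ Cu : ℝ, κ < Cu → SINR_TP < SINR_SP Cu :=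
  stmt0_general L K β ρd ρp hβ hρd hρp 𝓛 j m hden SINR_TP hTP SINR_SP hSP κ hκ
end

section
/- Let L, K, M, C_u be positive reals with LK > 1. The function f(x) = [ LK/(C_u(1−x)) + (1/M)( (LK−1)/x + (LK−1)²/(C_u(1−x)) ) ]^{−1} on x ∈ (0,1) attains its strict global maximum at the unique point x* = ( 1 + √( ( LK/C_u + (LK−1)²/(M C_u) ) / ( (LK−1)/M ) ) )^{−1}, and the corresponding complementary value is 1 − x* = ( 1 + √( ( (LK−1)/M ) / ( LK/C_u + (LK−1)²/(M C_u) ) ) )^{−1}. -/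
/-!
After the substitution `a = L K / C_u + (L K - 1)² / (M C_u)`, `b = (L K - 1) / M`, the bound is
`f x = (a / (1 - x) + b / x)⁻¹`, so one minimises `g x = a / (1 - x) + b / x` on `(0,1)`.
With `s = √a`, `t = √b` one has the sum-of-squares identity
`g x - (s + t)² = ((s + t) x - t)² / (x (1 - x))`,
so `g` attains its minimum `(s + t)²` exactly at `x = t / (s + t) = (1 + √(a / b))⁻¹`.
-/

open Real Set

lemma sq_div_one_sub_add_sq_div_sub_sq {s t x : ℝ} (hx₀ : x ≠ 0) (hx₁ : x ≠ 1) :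
    s ^ 2 / (1 - x) + t ^ 2 / x - (s + t) ^ 2 = ((s + t) * x - t) ^ 2 / (x * (1 - x)) := by
  have : 1 - x ≠ 0 := sub_ne_zero.mpr hx₁.symm
  field_simp
  ring

lemma inv_one_add_sqrt_div {a b : ℝ} (ha : 0 ≤ a) (hb : 0 < b) :
    (1 + √(a / b))⁻¹ = √b / (√a + √b) := by
  have : 0 < √b := sqrt_pos.mpr hb
  rw [sqrt_div ha]
  field_simp
  ring

section

variable {a b : ℝ} (ha : 0 < a) (hb : 0 < b)
include ha hb

lemma one_sub_inv_one_add_sqrt_div : 1 - (1 + √(a / b))⁻¹ = (1 + √(b / a))⁻¹ := by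
  have : 0 < √a := sqrt_pos.mpr ha
  have : 0 < √b := sqrt_pos.mpr hb
  rw [inv_one_add_sqrt_div ha.le hb, inv_one_add_sqrt_div hb.le ha]
  field_simp
  ring

lemma inv_one_add_sqrt_div_mem_Ioo : (1 + √(a / b))⁻¹ ∈ Ioo 0 1 := by
  have : 0 < √a := sqrt_pos.mpr ha
  have : 0 < √b := sqrt_pos.mpr hb
  rw [inv_one_add_sqrt_div ha.le hb, mem_Ioo, div_lt_one (by positivity)]
  exact ⟨by positivity, by linarith⟩

lemma div_one_sub_add_div_lt_of_ne {x : ℝ} (hx : x ∈ Ioo 0 1)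
    (hne : x ≠ (1 + √(a / b))⁻¹) :
    a / (1 - (1 + √(a / b))⁻¹) + b / (1 + √(a / b))⁻¹ < a / (1 - x) + b / x := by
  obtain ⟨hx₀, hx₁⟩ := hx
  obtain ⟨hx₀', hx₁'⟩ := inv_one_add_sqrt_div_mem_Ioo ha hb
  have hs : 0 < √a := sqrt_pos.mpr ha
  have ht : 0 < √b := sqrt_pos.mpr hb
  have h_sos := @sq_div_one_sub_add_sq_div_sub_sq (√a) (√b)
  simp only [sq_sqrt ha.le, sq_sqrt hb.le] at h_sos
  have h_star : (√a + √b) * (1 + √(a / b))⁻¹ - √b = 0 := by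
    rw [inv_one_add_sqrt_div ha.le hb]
    field_simp
    ring
  have h_x : (√a + √b) * x - √b ≠ 0 := by
    refine fun h => hne ?_
    rw [inv_one_add_sqrt_div ha.le hb, eq_div_iff (by positivity)]
    linarith
  have h_pos : 0 < ((√a + √b) * x - √b) ^ 2 / (x * (1 - x)) := by
    have : 0 < 1 - x := by linarith
    positivity
  have h_gap := h_sos hx₀.ne' hx₁.ne
  have h_min := h_sos hx₀'.ne' hx₁'.ne
  rw [h_star, zero_pow two_ne_zero, zero_div] at h_min
  linarith

end

theorem stmt6_general (L K M Cu : ℝ) (hM : 0 < M)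
    (hCu : 0 < Cu) (hLK : 1 < L * K)
    (f : ℝ → ℝ)
    (hf : ∀ x, f x = (L * K / (Cu * (1 - x))
      + (1 / M) * ((L * K - 1) / x + (L * K - 1) ^ 2 / (Cu * (1 - x))))⁻¹)
    (xstar : ℝ)
    (hx : xstar = (1 + Real.sqrt ((L * K / Cu + (L * K - 1) ^ 2 / (M * Cu))
      / ((L * K - 1) / M)))⁻¹) :
    xstar ∈ Set.Ioo (0 : ℝ) 1 ∧
    (∀ x ∈ Set.Ioo (0 : ℝ) 1, x ≠ xstar → f x < f xstar) ∧
    1 - xstar = (1 + Real.sqrt (((L * K - 1) / M)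
      / (L * K / Cu + (L * K - 1) ^ 2 / (M * Cu))))⁻¹ := by
  set a := L * K / Cu + (L * K - 1) ^ 2 / (M * Cu)
  set b := (L * K - 1) / M
  have hLK₀ : 0 < L * K := by linarith
  have ha : 0 < a := by positivity
  have hb : 0 < b := div_pos (by linarith) hM
  have hf' : ∀ x, f x = (a / (1 - x) + b / x)⁻¹ := fun x => by
    rw [hf]
    simp only [a, b, div_eq_mul_inv, mul_inv]
    ring
  have hx_mem := inv_one_add_sqrt_div_mem_Ioo ha hb
  subst hx
  refine ⟨hx_mem, fun x hx hne => ?_, one_sub_inv_one_add_sqrt_div ha hb⟩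
  have h₀ : 0 < (1 + √(a / b))⁻¹ := hx_mem.1
  have h₁ : 0 < 1 - (1 + √(a / b))⁻¹ := sub_pos.mpr hx_mem.2
  rw [hf', hf']
  exact inv_strictAnti₀ (by positivity) (div_one_sub_add_div_lt_of_ne ha hb hx hne)

/-- The SINR lower bound `f` under a common power split attains its strict
global maximum on `(0,1)` at the unique point `x*` given in closed form; the
complementary pilot power fraction `1 - x*` also has the stated closed form. -/
theorem stmt6 (L K M Cu : ℝ) (hL : 0 < L) (hK : 0 < K) (hM : 0 < M)
    (hCu : 0 < Cu) (hLK : 1 < L * K)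
    (f : ℝ → ℝ)
    (hf : ∀ x, f x = (L * K / (Cu * (1 - x))
      + (1 / M) * ((L * K - 1) / x + (L * K - 1) ^ 2 / (Cu * (1 - x))))⁻¹)
    (xstar : ℝ)
    (hx : xstar = (1 + Real.sqrt ((L * K / Cu + (L * K - 1) ^ 2 / (M * Cu))
      / ((L * K - 1) / M)))⁻¹) :
    xstar ∈ Set.Ioo (0 : ℝ) 1 ∧
    (∀ x ∈ Set.Ioo (0 : ℝ) 1, x ≠ xstar → f x < f xstar) ∧
    1 - xstar = (1 + Real.sqrt (((L * K - 1) / M)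
      / (L * K / Cu + (L * K - 1) ^ 2 / (M * Cu))))⁻¹ :=
  stmt6_general L K M Cu hM hCu hLK f hf xstar hx
end

section
/- Under the hypotheses of the statistics-aware power-control bound (0 < β̄_{ℓ,k} ≤ ω for all (ℓ,k), β̄_{j,m} = ω), if moreover every user uses the same data power fraction, ρ̄_{d,ℓ,k} = ρ̄ ∈ (0,1) and ρ̄_{p,ℓ,k}² = 1 − ρ̄² for all (ℓ,k), then the finite-M uplink SINR S of user m in cell j satisfies S ≥ [ LK/(C_u(1−ρ̄²)) + (1/M)( (LK−1)/ρ̄² + (LK−1)²/(C_u(1−ρ̄²)) ) ]^{−1}. -/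
open Finset

set_option maxHeartbeats 1000000 in
/-- Under statistics-aware power control (`0 < β̄ ≤ ω`, `β̄_{j,m} = ω`) and a
common data power fraction `ρ̄² ∈ (0,1)` for all users (pilot power fraction
`1 - ρ̄²`), the finite-`M` uplink SINR `S` of user `m` in cell `j` satisfies
`S ≥ (LK/(Cu(1-ρ̄²)) + (1/M)((LK-1)/ρ̄² + (LK-1)²/(Cu(1-ρ̄²))))⁻¹`. -/
theorem stmt8 (L K : ℕ) (hL : 1 ≤ L) (hK : 1 ≤ K)
    (j : Fin L) (m : Fin K) (M Cu ω : ℝ) (hM : 0 < M) (hCu : 0 < Cu) (hω : 0 < ω)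
    (β : Fin L × Fin K → ℝ)
    (hβpos : ∀ i, 0 < β i) (hβω : ∀ i, β i ≤ ω) (hβjm : β (j, m) = ω)
    (ρ : ℝ) (hρ0 : 0 < ρ) (hρ1 : ρ < 1)
    (S : ℝ)
    (hS : S = ((∑ i : Fin L × Fin K,
          ρ ^ 2 * (β i) ^ 2 / (Cu * (1 - ρ ^ 2) * ρ ^ 2 * (β (j, m)) ^ 2))
      + (1 / M) * ((∑ i ∈ Finset.univ.erase (j, m), β i / (ρ ^ 2 * β (j, m)))
        + ∑ i ∈ Finset.univ.erase (j, m), ∑ i' ∈ Finset.univ.erase i,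
            ρ ^ 2 * β i * β i'
              / (Cu * (1 - ρ ^ 2) * ρ ^ 2 * (β (j, m)) ^ 2)))⁻¹) :
    S ≥ ((L : ℝ) * K / (Cu * (1 - ρ ^ 2))
      + (1 / M) * (((L : ℝ) * K - 1) / ρ ^ 2
        + ((L : ℝ) * K - 1) ^ 2 / (Cu * (1 - ρ ^ 2))))⁻¹ := by
  have hρ2 : (0:ℝ) < ρ ^ 2 := by positivity
  have h1ρ : (0:ℝ) < 1 - ρ ^ 2 := by nlinarith
  have hc : (0:ℝ) < Cu * (1 - ρ ^ 2) := by positivity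
  subst hS
  rw [hβjm, ge_iff_le]
  have hLK1 : 1 ≤ L * K := by simpa using Nat.mul_le_mul hL hK
  have hcardU : (Finset.univ : Finset (Fin L × Fin K)).card = L * K := by simp
  have hcastLK : ((L * K : ℕ) : ℝ) = (L : ℝ) * K := by push_cast; ring
  have hcast1 : ((L * K - 1 : ℕ) : ℝ) = (L : ℝ) * K - 1 := by
    rw [Nat.cast_sub hLK1]; push_cast; ring
  have hLKR1 : (1:ℝ) ≤ (L : ℝ) * K := by
    rw [← hcastLK]; exact_mod_cast hLK1
  -- termwise bounds
  have hterm1 : ∀ i : Fin L × Fin K,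
      ρ ^ 2 * (β i) ^ 2 / (Cu * (1 - ρ ^ 2) * ρ ^ 2 * ω ^ 2)
        ≤ 1 / (Cu * (1 - ρ ^ 2)) := by
    intro i
    have h1 := hβpos i; have h2 := hβω i
    rw [div_le_div_iff₀ (by positivity) (by positivity)]
    have key : (β i) ^ 2 ≤ ω ^ 2 := by nlinarith
    nlinarith [mul_nonneg (mul_pos hc hρ2).le (sub_nonneg.mpr key)]
  have hterm2 : ∀ i : Fin L × Fin K, β i / (ρ ^ 2 * ω) ≤ 1 / ρ ^ 2 := by
    intro i
    have h1 := hβpos i; have h2 := hβω i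
    rw [div_le_div_iff₀ (by positivity) (by positivity)]
    nlinarith [mul_nonneg hρ2.le (sub_nonneg.mpr h2)]
  have hterm3 : ∀ i i' : Fin L × Fin K,
      ρ ^ 2 * β i * β i' / (Cu * (1 - ρ ^ 2) * ρ ^ 2 * ω ^ 2)
        ≤ 1 / (Cu * (1 - ρ ^ 2)) := by
    intro i i'
    have h1 := hβpos i; have h2 := hβω i
    have h3 := hβpos i'; have h4 := hβω i'
    rw [div_le_div_iff₀ (by positivity) (by positivity)]
    have key : β i * β i' ≤ ω ^ 2 := by nlinarith
    nlinarith [mul_nonneg (mul_pos hc hρ2).le (sub_nonneg.mpr key)]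
  -- positivity of the denominator
  have hDpos : (0:ℝ) < (∑ i : Fin L × Fin K,
          ρ ^ 2 * (β i) ^ 2 / (Cu * (1 - ρ ^ 2) * ρ ^ 2 * ω ^ 2))
      + (1 / M) * ((∑ i ∈ Finset.univ.erase (j, m), β i / (ρ ^ 2 * ω))
        + ∑ i ∈ Finset.univ.erase (j, m), ∑ i' ∈ Finset.univ.erase i,
            ρ ^ 2 * β i * β i' / (Cu * (1 - ρ ^ 2) * ρ ^ 2 * ω ^ 2)) := by
    apply add_pos_of_pos_of_nonneg
    · apply Finset.sum_pos
      · intro i _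
        have h1 := hβpos i
        positivity
      · exact ⟨(j, m), Finset.mem_univ _⟩
    · apply mul_nonneg (by positivity)
      apply add_nonneg
      · apply Finset.sum_nonneg
        intro i _
        have h1 := hβpos i
        positivity
      · apply Finset.sum_nonneg
        intro i _
        apply Finset.sum_nonneg
        intro i' _
        have h1 := hβpos i; have h3 := hβpos i'
        positivity
  apply inv_anti₀ hDpos
  -- bound each sum
  have hsum1 : (∑ i : Fin L × Fin K,
        ρ ^ 2 * (β i) ^ 2 / (Cu * (1 - ρ ^ 2) * ρ ^ 2 * ω ^ 2))
      ≤ (L : ℝ) * K / (Cu * (1 - ρ ^ 2)) := by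
    calc (∑ i : Fin L × Fin K,
          ρ ^ 2 * (β i) ^ 2 / (Cu * (1 - ρ ^ 2) * ρ ^ 2 * ω ^ 2))
        ≤ (Finset.univ : Finset (Fin L × Fin K)).card • (1 / (Cu * (1 - ρ ^ 2))) :=
          Finset.sum_le_card_nsmul _ _ _ (fun i _ => hterm1 i)
      _ = (L : ℝ) * K / (Cu * (1 - ρ ^ 2)) := by
          rw [hcardU, nsmul_eq_mul, hcastLK]; ring
  have hcardE : ((Finset.univ.erase ((j, m) : Fin L × Fin K)).card : ℝ)
      = (L : ℝ) * K - 1 := by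
    rw [Finset.card_erase_of_mem (Finset.mem_univ _), hcardU]
    exact hcast1
  have hsum2 : (∑ i ∈ Finset.univ.erase ((j, m) : Fin L × Fin K),
        β i / (ρ ^ 2 * ω)) ≤ ((L : ℝ) * K - 1) / ρ ^ 2 := by
    calc (∑ i ∈ Finset.univ.erase ((j, m) : Fin L × Fin K), β i / (ρ ^ 2 * ω))
        ≤ (Finset.univ.erase ((j, m) : Fin L × Fin K)).card • (1 / ρ ^ 2) :=
          Finset.sum_le_card_nsmul _ _ _ (fun i _ => hterm2 i)
      _ = ((L : ℝ) * K - 1) / ρ ^ 2 := by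
          rw [nsmul_eq_mul, hcardE]; ring
  have hsum3 : (∑ i ∈ Finset.univ.erase ((j, m) : Fin L × Fin K),
        ∑ i' ∈ Finset.univ.erase i,
          ρ ^ 2 * β i * β i' / (Cu * (1 - ρ ^ 2) * ρ ^ 2 * ω ^ 2))
      ≤ ((L : ℝ) * K - 1) ^ 2 / (Cu * (1 - ρ ^ 2)) := by
    have hinner : ∀ i : Fin L × Fin K,
        (∑ i' ∈ Finset.univ.erase i,
          ρ ^ 2 * β i * β i' / (Cu * (1 - ρ ^ 2) * ρ ^ 2 * ω ^ 2))
        ≤ ((L : ℝ) * K - 1) * (1 / (Cu * (1 - ρ ^ 2))) := by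
      intro i
      have hcardEi : ((Finset.univ.erase i).card : ℝ) = (L : ℝ) * K - 1 := by
        rw [Finset.card_erase_of_mem (Finset.mem_univ _), hcardU]
        exact hcast1
      calc (∑ i' ∈ Finset.univ.erase i,
            ρ ^ 2 * β i * β i' / (Cu * (1 - ρ ^ 2) * ρ ^ 2 * ω ^ 2))
          ≤ (Finset.univ.erase i).card • (1 / (Cu * (1 - ρ ^ 2))) :=
            Finset.sum_le_card_nsmul _ _ _ (fun i' _ => hterm3 i i')
        _ = ((L : ℝ) * K - 1) * (1 / (Cu * (1 - ρ ^ 2))) := by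
            rw [nsmul_eq_mul, hcardEi]
    calc (∑ i ∈ Finset.univ.erase ((j, m) : Fin L × Fin K),
          ∑ i' ∈ Finset.univ.erase i,
            ρ ^ 2 * β i * β i' / (Cu * (1 - ρ ^ 2) * ρ ^ 2 * ω ^ 2))
        ≤ (Finset.univ.erase ((j, m) : Fin L × Fin K)).card •
            (((L : ℝ) * K - 1) * (1 / (Cu * (1 - ρ ^ 2)))) :=
          Finset.sum_le_card_nsmul _ _ _ (fun i _ => hinner i)
      _ = ((L : ℝ) * K - 1) ^ 2 / (Cu * (1 - ρ ^ 2)) := by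
          rw [nsmul_eq_mul, hcardE]; ring
  have hM' : (0:ℝ) ≤ 1 / M := by positivity
  exact add_le_add hsum1 (mul_le_mul_of_nonneg_left (add_le_add hsum2 hsum3) hM')
end
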